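/- If ψ ∈ W, then Bψ(x) ≥ 0 for all x in [ε,∞), and the function Bψ is continuous on [ε,∞). -/

import Mathlib

open Real Set MeasureTheory

/-- The nonlinear integral operator `B`. -/
noncomputable def opB (lam ε : ℝ) (ψ : ℝ → ℝ) (x : ℝ) : ℝ :=
  (lam / 2) * Real.sqrt (x + ε) *
    ∫ y in Set.Ioi ε, (1 / (y + x + |y - x|)) * (y / Real.sqrt (y + ε)) *
      (ψ y / (y + (ψ y) ^ 2 / (y + ε)))

/-- Membership in `W`: bounded, continuous and nonnegative on `[ε,∞)`. -/
def memW (ε : ℝ) (ψ : ℝ → ℝ) : Prop :=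
  ContinuousOn ψ (Set.Ici ε) ∧ (∃ M : ℝ, ∀ x ∈ Set.Ici ε, |ψ x| ≤ M) ∧
    ∀ x ∈ Set.Ici ε, 0 ≤ ψ x

/-!
Nonnegativity is immediate, since every factor of the integrand is nonnegative. For continuity,
the kernel `1 / (y + x + |y - x|) = 1 / (2 max x y)` is continuous in `x` and bounded by
`1 / (2y)`, while the rest of the integrand is `O(y^(-1/2))` because `ψ` is bounded. The
integrand is thus dominated by a multiple of `y^(-3/2)`, which is integrable on `(ε, ∞)`, and
dominated convergence applies.
-/

lemma add_add_abs_sub_eq_two_mul_max (x y : ℝ) : y + x + |y - x| = 2 * max x y := by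
  rw [add_comm y x, ← two_nsmul_sup_eq_add_add_abs_sub, nsmul_eq_mul, Nat.cast_ofNat]

lemma add_add_abs_sub_pos (x : ℝ) {y : ℝ} (hy : 0 < y) : 0 < y + x + |y - x| := by
  rw [add_add_abs_sub_eq_two_mul_max]
  exact mul_pos two_pos (hy.trans_le (le_max_right x y))

lemma one_div_add_add_abs_sub_le (x : ℝ) {y : ℝ} (hy : 0 < y) :
    1 / (y + x + |y - x|) ≤ 1 / (2 * y) := by
  rw [add_add_abs_sub_eq_two_mul_max]
  gcongr
  exact le_max_right x y

theorem continuous_integral_one_div_add_add_abs_sub_mul {a : ℝ} (ha : 0 ≤ a) {w : ℝ → ℝ}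
    (hw : IntegrableOn (fun y => w y / y) (Ioi a)) :
    Continuous fun x => ∫ y in Ioi a, 1 / (y + x + |y - x|) * w y := by
  have hpos : ∀ᵐ y ∂volume.restrict (Ioi a), 0 < y :=
    (ae_restrict_mem measurableSet_Ioi).mono fun y hy => ha.trans_lt hy
  have hw_meas : AEStronglyMeasurable w (volume.restrict (Ioi a)) := by
    refine (hw.aestronglyMeasurable.mul continuous_id.aestronglyMeasurable).congr ?_
    filter_upwards [hpos] with y hy
    exact div_mul_cancel₀ _ hy.ne'
  refine continuous_of_dominated (bound := fun y => ‖w y / y‖ / 2) (fun x => ?_) (fun x => ?_)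
    (hw.norm.div_const 2) ?_
  · exact (by fun_prop : Measurable fun y : ℝ => 1 / (y + x + |y - x|)).aestronglyMeasurable.mul
      hw_meas
  · filter_upwards [hpos] with y hy
    calc ‖1 / (y + x + |y - x|) * w y‖
        = 1 / (y + x + |y - x|) * ‖w y‖ := by
          rw [norm_mul, Real.norm_of_nonneg (one_div_nonneg.2 (add_add_abs_sub_pos x hy).le)]
      _ ≤ 1 / (2 * y) * ‖w y‖ :=
          mul_le_mul_of_nonneg_right (one_div_add_add_abs_sub_le x hy) (norm_nonneg _)
      _ = ‖w y / y‖ / 2 := by rw [norm_div, Real.norm_of_nonneg hy.le]; ring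
  · filter_upwards [hpos] with y hy
    exact (continuous_const.div (by fun_prop) fun x => (add_add_abs_sub_pos x hy).ne').mul
      continuous_const

noncomputable def opBWeight (ε : ℝ) (ψ : ℝ → ℝ) (y : ℝ) : ℝ :=
  y / √(y + ε) * (ψ y / (y + ψ y ^ 2 / (y + ε)))

lemma opB_eq (lam ε : ℝ) (ψ : ℝ → ℝ) (x : ℝ) :
    opB lam ε ψ x =
      lam / 2 * √(x + ε) * ∫ y in Ioi ε, 1 / (y + x + |y - x|) * opBWeight ε ψ y := by
  simp only [opB, opBWeight, mul_assoc]

lemma opBWeight_nonneg {ε y : ℝ} (hε : 0 ≤ ε) (hy : 0 ≤ y) {ψ : ℝ → ℝ} (hψ : 0 ≤ ψ y) :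
    0 ≤ opBWeight ε ψ y := by
  unfold opBWeight
  positivity

lemma abs_opBWeight_le {ε y M : ℝ} (hε : 0 ≤ ε) (hy : 0 < y) {ψ : ℝ → ℝ} (hψ : |ψ y| ≤ M) :
    |opBWeight ε ψ y| ≤ M / √y := by
  have hsqrt : y / √(y + ε) ≤ √y := by
    rw [div_le_iff₀ (by positivity)]
    calc y = √y * √y := (mul_self_sqrt hy.le).symm
      _ ≤ √y * √(y + ε) := by gcongr; linarith
  have hfrac : |ψ y / (y + ψ y ^ 2 / (y + ε))| ≤ M / y := by
    have hden : 0 < y + ψ y ^ 2 / (y + ε) := by positivity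
    rw [abs_div, abs_of_pos hden]
    exact div_le_div₀ ((abs_nonneg _).trans hψ) hψ hy (le_add_of_nonneg_right (by positivity))
  calc |opBWeight ε ψ y|
      = y / √(y + ε) * |ψ y / (y + ψ y ^ 2 / (y + ε))| := by
        rw [opBWeight, abs_mul, abs_of_nonneg (by positivity)]
    _ ≤ √y * (M / y) := by gcongr
    _ = M / √y := by
        field_simp
        rw [sq_sqrt hy.le, mul_comm]

lemma continuousOn_opBWeight {ε : ℝ} (hε : 0 ≤ ε) {ψ : ℝ → ℝ} {s : Set ℝ}
    (hψ : ContinuousOn ψ s) (hs : s ⊆ Ioi 0) : ContinuousOn (opBWeight ε ψ) s := by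
  have hpos : ∀ y ∈ s, 0 < y := hs
  have hshift : ∀ y ∈ s, 0 < y + ε := fun y hy => by linarith [hpos y hy]
  have hfactor : ContinuousOn (fun y => y / √(y + ε)) s :=
    continuousOn_id.div (by fun_prop) fun y hy => (sqrt_pos.2 (hshift y hy)).ne'
  have hden : ContinuousOn (fun y => y + ψ y ^ 2 / (y + ε)) s :=
    continuousOn_id.add ((hψ.pow 2).div (by fun_prop) fun y hy => (hshift y hy).ne')
  exact hfactor.mul (hψ.div hden fun y hy => by have := hpos y hy; positivity)

lemma rpow_neg_three_halves {y : ℝ} (hy : 0 < y) : y ^ (-(3 / 2) : ℝ) = 1 / √y / y := by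
  rw [rpow_neg hy.le, show (3 / 2 : ℝ) = 1 / 2 + 1 by norm_num, rpow_add_one hy.ne',
    ← sqrt_eq_rpow]
  field_simp

theorem integrableOn_opBWeight_div {ε M : ℝ} (hε : 0 < ε) {ψ : ℝ → ℝ}
    (hψ : ContinuousOn ψ (Ioi ε)) (hM : ∀ y ∈ Ioi ε, |ψ y| ≤ M) :
    IntegrableOn (fun y => opBWeight ε ψ y / y) (Ioi ε) := by
  have hbound : IntegrableOn (fun y : ℝ => M * y ^ (-(3 / 2) : ℝ)) (Ioi ε) :=
    (integrableOn_Ioi_rpow_of_lt (by norm_num) hε).const_mul M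
  have hcont : ContinuousOn (fun y => opBWeight ε ψ y / y) (Ioi ε) :=
    (continuousOn_opBWeight hε.le hψ fun y hy => hε.trans hy).div continuousOn_id
      fun y hy => (hε.trans hy).ne'
  refine hbound.mono' (hcont.aestronglyMeasurable measurableSet_Ioi) ?_
  filter_upwards [ae_restrict_mem measurableSet_Ioi] with y hy
  have hy0 : 0 < y := hε.trans hy
  rw [norm_div, Real.norm_of_nonneg hy0.le, rpow_neg_three_halves hy0, Real.norm_eq_abs]
  calc |opBWeight ε ψ y| / y ≤ M / √y / y := by
        gcongr
        exact abs_opBWeight_le hε.le hy0 (hM y hy)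
    _ = M * (1 / √y / y) := by ring

theorem stmt_14_general (ε lam : ℝ) (hε : 0 < ε) (hlam0 : 0 < lam)
    (ψ : ℝ → ℝ) (hψ : memW ε ψ) :
    (∀ x ∈ Set.Ici ε, 0 ≤ opB lam ε ψ x) ∧
      ContinuousOn (opB lam ε ψ) (Set.Ici ε) := by
  obtain ⟨hcont, ⟨M, hM⟩, hnonneg⟩ := hψ
  refine ⟨fun x _ => ?_, ?_⟩
  · have hint : 0 ≤ ∫ y in Ioi ε, 1 / (y + x + |y - x|) * opBWeight ε ψ y := by
      refine setIntegral_nonneg measurableSet_Ioi fun y hy => ?_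
      have hy0 : 0 < y := hε.trans hy
      exact mul_nonneg (one_div_nonneg.2 (add_add_abs_sub_pos x hy0).le)
        (opBWeight_nonneg hε.le hy0.le (hnonneg y (Ioi_subset_Ici_self hy)))
    rw [opB_eq]
    positivity
  · have hweight := integrableOn_opBWeight_div hε (hcont.mono Ioi_subset_Ici_self)
      fun y hy => hM y (Ioi_subset_Ici_self hy)
    have hintegral := continuous_integral_one_div_add_add_abs_sub_mul hε.le hweight
    rw [funext (opB_eq lam ε ψ)]
    exact (by fun_prop : Continuous _).continuousOn

theorem stmt_14 (ε lam : ℝ) (hε : 0 < ε) (hlam0 : 0 < lam) (hlam1 : lam < 1)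
    (ψ : ℝ → ℝ) (hψ : memW ε ψ) :
    (∀ x ∈ Set.Ici ε, 0 ≤ opB lam ε ψ x) ∧
      ContinuousOn (opB lam ε ψ) (Set.Ici ε) :=
  stmt_14_general ε lam hε hlam0 ψ hψ
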